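/- arXiv:1910.13653 — 2 statements merged into one kernel-verified Lean document; each statement's English description precedes it below -/
import Mathlib

section
/- For every entire function f : ℂ × ℂ → ℂ there exists an entire function g : ℂ × ℂ → ℂ such that D₀g(z) = f(z) for every z ∈ ℂ × ℂ. -/
open Complex

/-- The 0th complex partial derivative of a function on `ℂ × ℂ`. -/
noncomputable def D0 (f : ℂ × ℂ → ℂ) (z : ℂ × ℂ) : ℂ :=
  fderiv ℂ f z (1, 0)

/-!
The primitive is `g (z₁, z₂) = ∫₀¹ z₁ f (t z₁, z₂) dt`, the integral of `f (·, z₂)` along the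
segment from `0` to `z₁`. It is holomorphic in both variables because the Schwarz lemma bounds
`‖fderiv f‖` locally by `sup ‖f‖`, which justifies differentiating under the integral sign. For
fixed `z₂` it equals `Φ z₁ - Φ 0` for a primitive `Φ` of the entire function `f (·, z₂)`, so its
`z₁`-derivative is `f`.
-/

open Metric Set Function

variable {H E : Type*} [NormedAddCommGroup H] [NormedSpace ℂ H]
  [NormedAddCommGroup E] [NormedSpace ℂ E]

theorem norm_fderiv_le_of_forall_mem_ball_norm_le {f : H → E} {c : H} {r C : ℝ}
    (hd : DifferentiableOn ℂ f (ball c r)) (hr : 0 < r) (hC : ∀ w ∈ ball c r, ‖f w‖ ≤ C) :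
    ‖fderiv ℂ f c‖ ≤ 2 * C / r := by
  refine Complex.norm_fderiv_le_div_of_mapsTo_ball hd (fun w hw => ?_) hr
  rw [mem_closedBall, dist_eq_norm]
  calc ‖f w - f c‖ ≤ ‖f w‖ + ‖f c‖ := norm_sub_le _ _
    _ ≤ 2 * C := by linarith [hC w hw, hC c (mem_ball_self hr)]

theorem differentiable_parametric_intervalIntegral [FiniteDimensional ℂ H]
    [SecondCountableTopology E] [CompleteSpace E] {F : H → ℝ → E}
    (hF : Continuous (uncurry F)) (hdiff : ∀ t, Differentiable ℂ (F · t)) (a b : ℝ) :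
    Differentiable ℂ fun x => ∫ t in a..b, F x t := by
  intro x₀
  obtain ⟨C, hC⟩ := ((isCompact_closedBall x₀ 2).prod isCompact_uIcc).exists_bound_of_continuousOn
    hF.continuousOn
  have hF'_le : ∀ t ∈ uIcc a b, ∀ x ∈ ball x₀ 1, ‖fderiv ℂ (F · t) x‖ ≤ 2 * C := by
    intro t ht x hx
    have hball : ball x 1 ⊆ closedBall x₀ 2 := fun w hw => by
      rw [mem_ball] at hx hw
      rw [mem_closedBall]
      linarith [dist_triangle w x x₀]
    simpa using norm_fderiv_le_of_forall_mem_ball_norm_le (hdiff t).differentiableOn one_pos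
      fun w hw => hC (w, t) ⟨hball hw, ht⟩
  have hF'_meas : Measurable fun t => fderiv ℂ (F · t) x₀ := by
    borelize H
    exact (measurable_fderiv_with_param ℂ (f := fun t x => F x t) (hF.comp continuous_swap)).comp
      (measurable_id.prodMk measurable_const)
  refine (intervalIntegral.hasFDerivAt_integral_of_dominated_of_fderiv_le
    (F' := fun x t => fderiv ℂ (F · t) x) (bound := fun _ => 2 * C) (ball_mem_nhds x₀ one_pos)
    ?_ ?_ ?_ ?_ intervalIntegrable_const ?_).differentiableAt
  · exact Filter.Eventually.of_forall fun x => (hF.uncurry_left x).aestronglyMeasurable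
  · exact (hF.uncurry_left x₀).intervalIntegrable a b
  · exact hF'_meas.aestronglyMeasurable
  · exact Filter.Eventually.of_forall fun t ht x hx => hF'_le t (uIoc_subset_uIcc ht) x hx
  · exact Filter.Eventually.of_forall fun t _ x _ => (hdiff t x).hasFDerivAt

theorem hasDerivAt_intervalIntegral_smul_comp_mul [CompleteSpace E] {φ : ℂ → E}
    (hφ : Differentiable ℂ φ) (u : ℂ) :
    HasDerivAt (fun u : ℂ => ∫ t in (0 : ℝ)..1, u • φ (t * u)) (φ u) u := by
  obtain ⟨Φ, hΦ⟩ := hφ.isExactOn_univ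
  have hprimitive : ∀ v : ℂ, ∫ t in (0 : ℝ)..1, v • φ (t * v) = Φ v - Φ 0 := by
    intro v
    have hd : ∀ t : ℝ, HasDerivAt (fun s : ℝ => Φ (s * v)) (v • φ (t * v)) t := by
      intro t
      have hlin : HasDerivAt (fun s : ℝ => (s : ℂ) * v) v t := by
        simpa using (hasDerivAt_id t).ofReal_comp.mul_const v
      exact (hΦ (t * v) trivial).scomp t hlin
    have hφ_cont := hφ.continuous
    simpa using intervalIntegral.integral_eq_sub_of_hasDerivAt (fun t _ => hd t)
      ((by fun_prop : Continuous fun t : ℝ => v • φ (t * v)).intervalIntegrable 0 1)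
  simp_rw [hprimitive]
  exact (hΦ u trivial).sub_const _

theorem HasFDerivAt.hasDerivAt_partial_fst {𝕜 F G : Type*} [NontriviallyNormedField 𝕜]
    [NormedAddCommGroup F] [NormedSpace 𝕜 F] [NormedAddCommGroup G] [NormedSpace 𝕜 G]
    {g : 𝕜 × F → G} {g' : 𝕜 × F →L[𝕜] G} {z : 𝕜 × F} (h : HasFDerivAt g g' z) :
    HasDerivAt (fun u => g (u, z.2)) (g' (1, 0)) z.1 :=
  h.comp_hasDerivAt z.1 ((hasDerivAt_id z.1).prodMk (hasDerivAt_const z.1 z.2))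

/-- Every entire function on `ℂ × ℂ` is the first holomorphic partial derivative of
an entire function. -/
theorem exists_entire_primitive_fst (f : ℂ × ℂ → ℂ) (hf : Differentiable ℂ f) :
    ∃ g : ℂ × ℂ → ℂ, Differentiable ℂ g ∧ ∀ z : ℂ × ℂ, D0 g z = f z := by
  set g : ℂ × ℂ → ℂ := fun x => ∫ t in (0 : ℝ)..1, x.1 • f (t * x.1, x.2)
  have hf_cont := hf.continuous
  have hg : Differentiable ℂ g :=
    differentiable_parametric_intervalIntegral (by fun_prop) (fun t => by fun_prop) 0 1
  refine ⟨g, hg, fun z => ?_⟩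
  exact (hg z).hasFDerivAt.hasDerivAt_partial_fst.unique
    (hasDerivAt_intervalIntegral_smul_comp_mul (φ := fun u => f (u, z.2)) (by fun_prop) z.1)
end

section
/- Identify ℂ⁵ with coordinates (u, v, z, w₁, w₂) and let U := {(u,v,z,w₁,w₂) ∈ ℂ⁵ : (v,w₁,w₂) ≠ 0}. Let Λ₅ := ExteriorAlgebra ℂ (Fin 5 → ℂ) with e₀,…,e₄ the images of the standard basis vectors, let Λ₃ := ExteriorAlgebra ℂ (Fin 3 → ℂ) with f₀, f₁, f₂ the images of the standard basis vectors, and set A := Λ₅ ⊗[ℂ] Λ₃. Define ρ(p)² := |v|² + |w₁|² + |w₂|² and F : U → A by F(p) := ρ(p)⁻⁶ • (e₀ * e₂) ⊗ (conj v • (f₁ * f₂) + conj w₁ • (f₂ * f₀) + conj w₂ • (f₀ * f₁)). Then for every p ∈ U: (i) ∂_u F(p) = 0, where ∂_u denotes the holomorphic Wirtinger derivative in the u-coordinate; and (ii) ∂_v F(p) * (e₀ ⊗ 1) = 0 in A, where ∂_v denotes the holomorphic Wirtinger derivative in the v-coordinate. Consequently (∂_u F(p)) * (e₁ ⊗ 1)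 + (∂_v F(p)) * (e₀ ⊗ 1) = 0. -/
open scoped TensorProduct

set_option synthInstance.maxHeartbeats 1000000
set_option maxHeartbeats 1000000

/-- The exterior algebra `Λ₅` of `ℂ⁵`. -/
noncomputable abbrev Lam5 : Type := ExteriorAlgebra ℂ (Fin 5 → ℂ)

/-- The exterior algebra `Λ₃` of `ℂ³`. -/
noncomputable abbrev Lam3 : Type := ExteriorAlgebra ℂ (Fin 3 → ℂ)

/-- The algebra `A = Λ₅ ⊗[ℂ] Λ₃`. -/
noncomputable abbrev AA : Type := Lam5 ⊗[ℂ] Lam3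

/-- The generators `e₀, …, e₄` of `Λ₅`. -/
noncomputable def e (i : Fin 5) : Lam5 := ExteriorAlgebra.ι ℂ (Pi.single i 1)

/-- The generators `f₀, f₁, f₂` of `Λ₃`. -/
noncomputable def fg (j : Fin 3) : Lam3 := ExteriorAlgebra.ι ℂ (Pi.single j 1)

/-- `ρ(p)² = |v|² + |w₁|² + |w₂|²`, where `p = (u, v, z, w₁, w₂)`. -/
noncomputable def rho2 (p : Fin 5 → ℂ) : ℝ := ‖p 1‖ ^ 2 + ‖p 3‖ ^ 2 + ‖p 4‖ ^ 2

/-- The Bochner–Martinelli polyvector field sourced by D3 branes at `v = w₁ = w₂ = 0`: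
`F(p) = ρ(p)⁻⁶ • (e₀e₂) ⊗ (v̄ • f₁f₂ + w̄₁ • f₂f₀ + w̄₂ • f₀f₁)`. -/
noncomputable def BM (p : Fin 5 → ℂ) : AA :=
  ((rho2 p : ℂ) ^ 3)⁻¹ •
    ((e 0 * e 2) ⊗ₜ[ℂ]
      ((starRingEnd ℂ) (p 1) • (fg 1 * fg 2) + (starRingEnd ℂ) (p 3) • (fg 2 * fg 0) +
        (starRingEnd ℂ) (p 4) • (fg 0 * fg 1)))

/-- The holomorphic Wirtinger derivative in the `j`-th coordinate of a function on `ℂ⁵`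
with values in a complex normed vector space. -/
noncomputable def wirt {W : Type} [NormedAddCommGroup W] [NormedSpace ℂ W]
    (j : Fin 5) (F : (Fin 5 → ℂ) → W) (p : Fin 5 → ℂ) : W :=
  (2 : ℂ)⁻¹ •
    (fderiv ℝ F p (Pi.single j 1) - Complex.I • fderiv ℝ F p (Pi.single j Complex.I))

/-! `F` does not depend on `u`, and all its values lie in the finite-dimensional, hence closed,
span of the `(e₀e₂) ⊗ fᵢfⱼ`, which right multiplication by `e₀ ⊗ 1` kills because
`e₀e₂e₀ = 0`. A real directional derivative of a function valued in a closed subspace is a limit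
of difference quotients, so it stays in that subspace; where the function is not differentiable
`fderiv` is `0`, so no smoothness of `F` is needed. -/

theorem ExteriorAlgebra.ι_mul_ι_mul_ι_self {R M : Type*} [CommRing R] [AddCommGroup M]
    [Module R M] (m n : M) : ι R m * ι R n * ι R m = 0 := by
  have hswap : ι R m * ι R n = -(ι R n * ι R m) :=
    eq_neg_of_add_eq_zero_left (ι_add_mul_swap m n)
  rw [hswap, neg_mul, mul_assoc, ι_sq_zero, mul_zero, neg_zero]

section RealDerivative

variable {E F : Type*} [NormedAddCommGroup E] [NormedSpace ℝ E] [NormedAddCommGroup F]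
  [NormedSpace ℝ F] {f : E → F}

theorem fderiv_apply_eq_zero_of_forall_add_smul {x v : E}
    (hf : ∀ t : ℝ, f (x + t • v) = f x) : fderiv ℝ f x v = 0 := by
  by_cases hd : DifferentiableAt ℝ f x
  · rw [← hd.lineDeriv_eq_fderiv, lineDeriv]
    simp only [hf, deriv_const]
  · rw [fderiv_zero_of_not_differentiableAt hd, zero_apply]

theorem fderiv_apply_mem_of_forall_mem {S : Submodule ℝ F} (hS : IsClosed (S : Set F))
    (hf : ∀ y, f y ∈ S) (x v : E) : fderiv ℝ f x v ∈ S := by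
  by_cases hd : DifferentiableAt ℝ f x
  · refine hS.mem_of_tendsto (hd.hasFDerivAt.hasLineDerivAt v).tendsto_slope_zero
      (Filter.Eventually.of_forall fun t => ?_)
    exact S.smul_mem _ (S.sub_mem (hf _) (hf _))
  · rw [fderiv_zero_of_not_differentiableAt hd, zero_apply]
    exact S.zero_mem

end RealDerivative

section Wirtinger

variable {W : Type} [NormedAddCommGroup W] [NormedSpace ℂ W] {F : (Fin 5 → ℂ) → W}

theorem wirt_eq_zero_of_forall_add_single {j : Fin 5} {p : Fin 5 → ℂ}
    (hF : ∀ c : ℂ, F (p + Pi.single j c) = F p) : wirt j F p = 0 := by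
  have hdir : ∀ c : ℂ, fderiv ℝ F p (Pi.single j c) = 0 := fun c =>
    fderiv_apply_eq_zero_of_forall_add_smul fun t => by
      rw [← Pi.single_smul', hF]
  rw [wirt, hdir, hdir, smul_zero, sub_zero, smul_zero]

theorem wirt_mem_of_forall_mem {S : Submodule ℂ W} (hS : IsClosed (S : Set W))
    (hF : ∀ p, F p ∈ S) (j : Fin 5) (p : Fin 5 → ℂ) : wirt j F p ∈ S := by
  have hdir : ∀ v, fderiv ℝ F p v ∈ S :=
    fderiv_apply_mem_of_forall_mem (S := S.restrictScalars ℝ) hS hF p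
  exact S.smul_mem _ (S.sub_mem (hdir _) (S.smul_mem _ (hdir _)))

end Wirtinger

theorem BM_add_single_zero (p : Fin 5 → ℂ) (c : ℂ) : BM (p + Pi.single 0 c) = BM p := by
  simp [BM, rho2]

noncomputable def bmSpan : Submodule ℂ AA :=
  Submodule.span ℂ
    {(e 0 * e 2) ⊗ₜ[ℂ] (fg 1 * fg 2), (e 0 * e 2) ⊗ₜ[ℂ] (fg 2 * fg 0),
      (e 0 * e 2) ⊗ₜ[ℂ] (fg 0 * fg 1)}

instance : FiniteDimensional ℂ bmSpan :=
  FiniteDimensional.span_of_finite ℂ (Set.toFinite _)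

theorem BM_mem_bmSpan (p : Fin 5 → ℂ) : BM p ∈ bmSpan := by
  rw [BM, TensorProduct.tmul_add, TensorProduct.tmul_add, TensorProduct.tmul_smul,
    TensorProduct.tmul_smul, TensorProduct.tmul_smul]
  refine bmSpan.smul_mem _ (add_mem (add_mem ?_ ?_) ?_) <;>
    exact bmSpan.smul_mem _ (Submodule.subset_span (by simp))

theorem bmSpan_le_ker_mulRight :
    bmSpan ≤ LinearMap.ker (LinearMap.mulRight ℂ (e 0 ⊗ₜ[ℂ] (1 : Lam3))) := by
  refine Submodule.span_le.mpr ?_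
  rintro x (rfl | rfl | rfl) <;>
    simp [Algebra.TensorProduct.tmul_mul_tmul, e, ExteriorAlgebra.ι_mul_ι_mul_ι_self]

theorem bm_field_annihilated_general (nrm : AddGroupNorm AA)
    (hnrm : ∀ (c : ℂ) (x : AA), nrm (c • x) = ‖c‖ * nrm x)
    (p : Fin 5 → ℂ) :
    letI : NormedAddCommGroup AA := nrm.toNormedAddCommGroup
    letI : NormedSpace ℂ AA := ⟨fun c x => le_of_eq (hnrm c x)⟩
    wirt 0 BM p = 0 ∧
      wirt 1 BM p * ((e 0) ⊗ₜ[ℂ] (1 : Lam3)) = 0 ∧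
      wirt 0 BM p * ((e 1) ⊗ₜ[ℂ] (1 : Lam3)) +
        wirt 1 BM p * ((e 0) ⊗ₜ[ℂ] (1 : Lam3)) = 0 := by
  let : NormedAddCommGroup AA := nrm.toNormedAddCommGroup
  let : NormedSpace ℂ AA := ⟨fun c x => le_of_eq (hnrm c x)⟩
  have hu : wirt 0 BM p = 0 := wirt_eq_zero_of_forall_add_single (BM_add_single_zero p)
  have hv : wirt 1 BM p * ((e 0) ⊗ₜ[ℂ] (1 : Lam3)) = 0 :=
    bmSpan_le_ker_mulRight
      (wirt_mem_of_forall_mem bmSpan.closed_of_finiteDimensional BM_mem_bmSpan 1 p)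
  exact ⟨hu, hv, by rw [hu, hv, zero_mul, add_zero]⟩

/-- On `U = {(u,v,z,w₁,w₂) : (v,w₁,w₂) ≠ 0}`: the Bochner–Martinelli field `F` sourced by
D3 branes satisfies `∂_u F(p) = 0`, `∂_v F(p) * (e₀ ⊗ 1) = 0`, and consequently
`(∂_u F(p)) * (e₁ ⊗ 1) + (∂_v F(p)) * (e₀ ⊗ 1) = 0`, i.e. `F` is annihilated by
`[∂_u ∧ ∂_v, −]`. -/
theorem bm_field_annihilated (nrm : AddGroupNorm AA)
    (hnrm : ∀ (c : ℂ) (x : AA), nrm (c • x) = ‖c‖ * nrm x)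
    (p : Fin 5 → ℂ) (hp : ¬(p 1 = 0 ∧ p 3 = 0 ∧ p 4 = 0)) :
    letI : NormedAddCommGroup AA := nrm.toNormedAddCommGroup
    letI : NormedSpace ℂ AA := ⟨fun c x => le_of_eq (hnrm c x)⟩
    wirt 0 BM p = 0 ∧
      wirt 1 BM p * ((e 0) ⊗ₜ[ℂ] (1 : Lam3)) = 0 ∧
      wirt 0 BM p * ((e 1) ⊗ₜ[ℂ] (1 : Lam3)) +
        wirt 1 BM p * ((e 0) ⊗ₜ[ℂ] (1 : Lam3)) = 0 :=
  bm_field_annihilated_general nrm hnrm p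
end
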